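/- arXiv:1911.09175 — 3 statements merged into one kernel-verified Lean document; each statement's English description precedes it below -/
import Mathlib

section
/- If M is an irreducible entrywise nonnegative square real matrix with spectral radius ρ(M) = 1, then there exists a diagonal matrix P with strictly positive diagonal entries such that MᵀPM - P is negative semidefinite. -/
/-!
Perron–Frobenius, applied to `M` and to `Mᵀ`, gives positive vectors `v`, `u` with `M v = r v` and
`uᵀ M = s uᵀ`; as `ρ(M) = 1`, both `r, s ≤ 1`, so `M v ≤ v` and `uᵀ M ≤ uᵀ`. Take
`P = diag (u / v)`. Cauchy–Schwarz with weights `M i j * v j` gives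
`(M x)ᵢ² ≤ (M v)ᵢ (M y)ᵢ` with `y = x² / v`, and therefore
`xᵀ Mᵀ P M x ≤ ∑ᵢ uᵢ (M y)ᵢ = (uᵀ M) y ≤ uᵀ y = xᵀ P x`.

The Perron vector maximises `r` over the compact set of pairs `(r, x)` with `x` in the standard
simplex and `r x ≤ M x`. Irreducibility makes `(1 + M) ^ (n - 1)` map nonzero nonnegative vectors
to positive ones, so a strict inequality somewhere in `r x ≤ M x` could be turned into a larger
`r`; hence the maximiser is an eigenvector, and it is positive.
-/

open Matrix Filter

noncomputable def specRad {m : Type*} [Fintype m] [DecidableEq m] (M : Matrix m m ℝ) : ℝ :=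
  sSup {r : ℝ | ∃ μ ∈ spectrum ℂ (M.map (algebraMap ℝ ℂ)), r = ‖μ‖}

noncomputable def mono {n : ℕ} (p : ℕ) (M : ℕ → Matrix (Fin n) (Fin n) ℝ) (k : ℕ) :
    Matrix (Fin n) (Fin n) ℝ :=
  (List.range p).foldl (fun A i => M (k + i) * A) 1

def SISdyn {n : ℕ} (h : ℝ) (β : ℕ → Fin n → Fin n → ℝ) (δ : ℕ → Fin n → ℝ)
    (x : ℕ → Fin n → ℝ) : Prop :=
  ∀ k i, x (k + 1) i = x k i + h * ((1 - x k i) * (∑ j, β k i j * x k j) - δ k i * x k i)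

def MatIrreducible {n : ℕ} (M : Matrix (Fin n) (Fin n) ℝ) : Prop :=
  ∀ S : Set (Fin n), S.Nonempty → Sᶜ.Nonempty → ∃ i ∈ S, ∃ j ∈ Sᶜ, M i j ≠ 0

theorem exists_pos_forall_mul_lt {ι : Type*} [Finite ι] (y : ι → ℝ) {w : ι → ℝ}
    (hw : ∀ i, 0 < w i) : ∃ ε > 0, ∀ i, ε * y i < w i := by
  have hsmall : ∀ᶠ ε in nhds (0 : ℝ), ∀ i, ε * y i < w i :=
    eventually_all.2 fun i =>
      (continuous_id.mul continuous_const).continuousAt.eventually_lt continuousAt_const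
        (by simpa using hw i)
  have hsmall' : ∀ᶠ ε in nhdsWithin (0 : ℝ) (Set.Ioi 0), ∀ i, ε * y i < w i :=
    nhdsWithin_le_nhds hsmall
  obtain ⟨ε, hε, hεpos⟩ := (hsmall'.and self_mem_nhdsWithin).exists
  exact ⟨ε, hεpos, hε⟩

section Nonneg

variable {ι : Type*} [Fintype ι] {M : Matrix ι ι ℝ}

theorem mulVec_nonneg (hM : ∀ i j, 0 ≤ M i j) {x : ι → ℝ} (hx : 0 ≤ x) : 0 ≤ M *ᵥ x :=
  fun i => Finset.sum_nonneg fun j _ => mul_nonneg (hM i j) (hx j)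

noncomputable def posSupport (x : ι → ℝ) : Finset ι := Finset.univ.filter fun i => 0 < x i

theorem posSupport_subset_of_le {x y : ι → ℝ} (h : x ≤ y) : posSupport x ⊆ posSupport y :=
  fun i hi => by
    simp only [posSupport, Finset.mem_filter, Finset.mem_univ, true_and] at hi ⊢
    exact hi.trans_le (h i)

theorem posSupport_smul {c : ℝ} (hc : 0 < c) (x : ι → ℝ) : posSupport (c • x) = posSupport x := by
  ext i
  simp [posSupport, mul_pos_iff_of_pos_left hc]

theorem pos_of_card_le_card_posSupport {x : ι → ℝ} (h : Fintype.card ι ≤ (posSupport x).card)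
    (i : ι) : 0 < x i := by
  have hfull : posSupport x = Finset.univ :=
    Finset.eq_univ_of_card _ ((Finset.card_le_univ _).antisymm h)
  have hi : i ∈ posSupport x := hfull ▸ Finset.mem_univ i
  simpa [posSupport] using hi

end Nonneg

section CollatzWielandt

variable {ι : Type*} [Fintype ι] {M : Matrix ι ι ℝ}

def collatzWielandtPairs (M : Matrix ι ι ℝ) : Set (ℝ × (ι → ℝ)) :=
  {p | 0 ≤ p.1 ∧ 0 ≤ p.2 ∧ ∑ i, p.2 i = 1 ∧ p.1 • p.2 ≤ M *ᵥ p.2}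

theorem mk_mem_collatzWielandtPairs {r : ℝ} {y : ι → ℝ} (hr : 0 ≤ r) (hy : 0 < y)
    (h : r • y ≤ M *ᵥ y) : (r, (∑ i, y i)⁻¹ • y) ∈ collatzWielandtPairs M := by
  have hsum : 0 < ∑ i, y i := by
    obtain ⟨i, hi⟩ := (Pi.lt_def.1 hy).2
    exact Finset.sum_pos' (fun j _ => hy.le j) ⟨i, Finset.mem_univ i, hi⟩
  refine ⟨hr, smul_nonneg (inv_nonneg.2 hsum.le) hy.le, ?_, ?_⟩
  · simp [← Finset.mul_sum, inv_mul_cancel₀ hsum.ne']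
  · rw [mulVec_smul, smul_comm]
    exact smul_le_smul_of_nonneg_left h (inv_nonneg.2 hsum.le)

theorem isCompact_collatzWielandtPairs (hM : ∀ i j, 0 ≤ M i j) :
    IsCompact (collatzWielandtPairs M) := by
  refine (isCompact_Icc (a := (0, 0)) (b := (∑ i, ∑ j, M i j, 1))).of_isClosed_subset ?_ ?_
  · exact (isClosed_le continuous_const continuous_fst).inter
      ((isClosed_le continuous_const continuous_snd).inter
        ((isClosed_eq (continuous_finsetSum _ fun i _ => (continuous_apply i).comp continuous_snd)
          continuous_const).inter
          (isClosed_le (continuous_fst.smul continuous_snd)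
            (continuous_const.matrix_mulVec continuous_snd))))
  rintro ⟨r, x⟩ ⟨hr, hx, hsum, hrx⟩
  have hx1 : x ≤ 1 := fun i =>
    (Finset.single_le_sum (fun j _ => hx j) (Finset.mem_univ i)).trans_eq hsum
  refine ⟨Prod.mk_le_mk.2 ⟨hr, hx⟩, Prod.mk_le_mk.2 ⟨?_, hx1⟩⟩
  calc r = ∑ i, r * x i := by rw [← Finset.mul_sum, hsum, mul_one]
    _ ≤ ∑ i, (M *ᵥ x) i := Finset.sum_le_sum fun i _ => hrx i
    _ ≤ ∑ i, ∑ j, M i j := Finset.sum_le_sum fun i _ => Finset.sum_le_sum fun j _ =>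
        mul_le_of_le_one_right (hM i j) (hx1 j)

end CollatzWielandt

section PerronFrobenius

variable {n : ℕ} {M : Matrix (Fin n) (Fin n) ℝ}

theorem MatIrreducible.transpose (hirr : MatIrreducible M) : MatIrreducible Mᵀ := by
  intro S hS hSc
  obtain ⟨i, hi, j, hj, hij⟩ := hirr Sᶜ hSc (by rwa [compl_compl])
  exact ⟨j, by simpa using hj, i, hi, hij⟩

theorem MatIrreducible.min_card_posSupport_succ_le (hM : ∀ i j, 0 ≤ M i j)
    (hirr : MatIrreducible M) {x : Fin n → ℝ} (hx : 0 < x) :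
    min n ((posSupport x).card + 1) ≤ (posSupport (x + M *ᵥ x)).card := by
  have hsub : posSupport x ⊆ posSupport (x + M *ᵥ x) :=
    posSupport_subset_of_le (le_add_of_nonneg_right (mulVec_nonneg hM hx.le))
  by_cases hfull : posSupport x = Finset.univ
  · calc min n ((posSupport x).card + 1) ≤ (posSupport x).card := by simp [hfull]
      _ ≤ _ := Finset.card_le_card hsub
  obtain ⟨a₀, ha₀⟩ : ∃ a, a ∉ posSupport x := by simpa [Finset.eq_univ_iff_forall] using hfull
  obtain ⟨b₀, hb₀⟩ := (Pi.lt_def.1 hx).2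
  obtain ⟨a, ha, b, hb, hab⟩ :=
    hirr {i | i ∉ posSupport x} ⟨a₀, ha₀⟩ ⟨b₀, by simpa [posSupport] using hb₀⟩
  have hxb : 0 < x b := by simpa [posSupport] using hb
  have hgrow : a ∈ posSupport (x + M *ᵥ x) := by
    simp only [posSupport, Finset.mem_filter, Finset.mem_univ, true_and, Pi.add_apply]
    calc 0 < M a b * x b := mul_pos ((hM a b).lt_of_ne' hab) hxb
      _ ≤ (M *ᵥ x) a := Finset.single_le_sum (fun j _ => mul_nonneg (hM a j) (hx.le j))
          (Finset.mem_univ b)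
      _ ≤ x a + (M *ᵥ x) a := le_add_of_nonneg_left (hx.le a)
  have hlt := Finset.card_lt_card ((Finset.ssubset_iff_of_subset hsub).2 ⟨a, hgrow, ha⟩)
  omega

theorem MatIrreducible.min_card_posSupport_add_le (hM : ∀ i j, 0 ≤ M i j)
    (hirr : MatIrreducible M) (k : ℕ) {x : Fin n → ℝ} (hx : 0 < x) :
    min n ((posSupport x).card + k) ≤ (posSupport ((1 + M) ^ k *ᵥ x)).card := by
  induction k generalizing x with
  | zero => simp
  | succ k ih =>
    have hstep := hirr.min_card_posSupport_succ_le hM hx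
    have hrest := ih (lt_add_of_lt_of_nonneg hx (mulVec_nonneg hM hx.le))
    rw [pow_succ, ← mulVec_mulVec, add_mulVec, one_mulVec]
    omega

theorem MatIrreducible.pow_mulVec_pos (hM : ∀ i j, 0 ≤ M i j) (hirr : MatIrreducible M)
    {x : Fin n → ℝ} (hx : 0 < x) (i : Fin n) : 0 < ((1 + M) ^ (n - 1) *ᵥ x) i := by
  have hgrow := hirr.min_card_posSupport_add_le hM (n - 1) hx
  obtain ⟨b, hb⟩ := (Pi.lt_def.1 hx).2
  have hne : 0 < (posSupport x).card := Finset.card_pos.2 ⟨b, by simpa [posSupport] using hb⟩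
  exact pos_of_card_le_card_posSupport (by rw [Fintype.card_fin]; omega) i

theorem MatIrreducible.pos_of_mulVec_eq_smul (hM : ∀ i j, 0 ≤ M i j) (hirr : MatIrreducible M)
    {v : Fin n → ℝ} (hv : 0 < v) {r : ℝ} (hr : 0 ≤ r) (hMv : M *ᵥ v = r • v) (i : Fin n) :
    0 < v i := by
  have hgrow := hirr.min_card_posSupport_succ_le hM hv
  have hsum : v + r • v = (1 + r) • v := by rw [add_smul, one_smul]
  rw [hMv, hsum, posSupport_smul (by linarith)] at hgrow
  exact pos_of_card_le_card_posSupport (by rw [Fintype.card_fin]; omega) i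

theorem MatIrreducible.exists_lt_smul_le_mulVec (hM : ∀ i j, 0 ≤ M i j) (hirr : MatIrreducible M)
    {v : Fin n → ℝ} (hv : 0 < v) {r : ℝ} (hrv : r • v ≤ M *ᵥ v) (hne : r • v ≠ M *ᵥ v) :
    ∃ s > r, ∃ y : Fin n → ℝ, 0 < y ∧ s • y ≤ M *ᵥ y := by
  set B := (1 + M) ^ (n - 1)
  set z := M *ᵥ v - r • v
  have hy := hirr.pow_mulVec_pos hM hv
  have hw := hirr.pow_mulVec_pos hM (sub_pos.2 (lt_of_le_of_ne hrv hne))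
  have hMy : M *ᵥ (B *ᵥ v) = r • (B *ᵥ v) + B *ᵥ z := by
    have hcomm : M * B = B * M := ((Commute.one_right M).add_right (Commute.refl M)).pow_right _
    rw [mulVec_mulVec, hcomm, ← mulVec_mulVec, mulVec_sub, mulVec_smul, add_sub_cancel]
  obtain ⟨ε, hε, hεw⟩ := exists_pos_forall_mul_lt (B *ᵥ v) hw
  refine ⟨r + ε, by linarith, B *ᵥ v, Pi.lt_def.2 ⟨fun i => (hy i).le, ?_⟩, fun i => ?_⟩
  · obtain ⟨b, -⟩ := (Pi.lt_def.1 hv).2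
    exact ⟨b, hy b⟩
  rw [hMy]
  simp only [Pi.smul_apply, Pi.add_apply, smul_eq_mul, add_mul]
  linarith [hεw i]

theorem MatIrreducible.exists_pos_eigenvector (hM : ∀ i j, 0 ≤ M i j) (hirr : MatIrreducible M) :
    ∃ r : ℝ, ∃ v : Fin n → ℝ, (∀ i, 0 < v i) ∧ M *ᵥ v = r • v := by
  cases isEmpty_or_nonempty (Fin n)
  · exact ⟨0, 0, isEmptyElim, Subsingleton.elim _ _⟩
  have hne : (collatzWielandtPairs M).Nonempty :=
    ⟨_, mk_mem_collatzWielandtPairs le_rfl zero_lt_one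
      (by rw [zero_smul]; exact mulVec_nonneg hM zero_le_one)⟩
  obtain ⟨⟨r, v⟩, ⟨hr, hv, hsum, hrv⟩, hmax⟩ :=
    (isCompact_collatzWielandtPairs hM).exists_isMaxOn hne continuous_fst.continuousOn
  have hv0 : 0 < v := lt_of_le_of_ne hv (by rintro rfl; simp at hsum)
  have hMv : M *ᵥ v = r • v := by
    by_contra hne
    obtain ⟨s, hs, y, hy, hsy⟩ := hirr.exists_lt_smul_le_mulVec hM hv0 hrv (Ne.symm hne)
    exact hs.not_ge (hmax (mk_mem_collatzWielandtPairs (hr.trans hs.le) hy hsy))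
  exact ⟨r, v, hirr.pos_of_mulVec_eq_smul hM hv0 hr hMv, hMv⟩

end PerronFrobenius

section Spectrum

variable {ι : Type*} [Fintype ι] [DecidableEq ι]

theorem Matrix.spectrum_transpose {R : Type*} [CommRing R] (A : Matrix ι ι R) :
    spectrum R Aᵀ = spectrum R A := by
  ext μ
  simp only [spectrum.mem_iff, isUnit_iff_isUnit_det, Algebra.algebraMap_eq_smul_one]
  rw [← det_transpose (μ • 1 - A), transpose_sub, transpose_smul, transpose_one]

theorem specRad_transpose (M : Matrix ι ι ℝ) : specRad Mᵀ = specRad M := by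
  rw [specRad, specRad, transpose_map, spectrum_transpose]

theorem abs_le_specRad_of_mulVec_eq_smul {M : Matrix ι ι ℝ} {v : ι → ℝ} {s : ℝ} (hv : v ≠ 0)
    (hMv : M *ᵥ v = s • v) : |s| ≤ specRad M := by
  have hs : (s : ℂ) ∈ spectrum ℂ (M.map (algebraMap ℝ ℂ)) := by
    rw [← spectrum_toLin', ← Module.End.hasEigenvalue_iff_mem_spectrum]
    refine Module.End.hasEigenvalue_of_hasEigenvector (x := algebraMap ℝ ℂ ∘ v) ⟨?_, ?_⟩
    · rw [Module.End.mem_eigenspace_iff, toLin'_apply]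
      funext i
      rw [← RingHom.map_mulVec, hMv]
      simp
    · contrapose! hv
      funext i
      simpa using congrFun hv i
  have hbdd : BddAbove {r : ℝ | ∃ μ ∈ spectrum ℂ (M.map (algebraMap ℝ ℂ)), r = ‖μ‖} := by
    refine ((finite_spectrum (M.map (algebraMap ℝ ℂ))).image (fun μ : ℂ => ‖μ‖)).bddAbove.mono ?_
    rintro r ⟨μ, hμ, rfl⟩
    exact ⟨μ, hμ, rfl⟩
  exact le_csSup hbdd ⟨s, hs, by simp⟩

theorem mulVec_le_self_of_specRad_le_one {M : Matrix ι ι ℝ} {v : ι → ℝ} (hv : 0 ≤ v) {r : ℝ}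
    (hMv : M *ᵥ v = r • v) (hρ : specRad M ≤ 1) : M *ᵥ v ≤ v := by
  rcases eq_or_ne v 0 with rfl | hv0
  · simp
  rw [hMv]
  exact smul_le_of_le_one_left hv
    ((le_abs_self r).trans ((abs_le_specRad_of_mulVec_eq_smul hv0 hMv).trans hρ))

end Spectrum

section Lyapunov

variable {ι : Type*} [Fintype ι] {M : Matrix ι ι ℝ}

theorem sq_mulVec_apply_le (hM : ∀ i j, 0 ≤ M i j) {v : ι → ℝ} (hv : ∀ i, 0 < v i)
    (x : ι → ℝ) (i : ι) :
    (M *ᵥ x) i ^ 2 ≤ (M *ᵥ v) i * (M *ᵥ fun j => x j ^ 2 / v j) i :=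
  Finset.sum_sq_le_sum_mul_sum_of_sq_le_mul _ (fun j _ => mul_nonneg (hM i j) (hv j).le)
    (fun j _ => mul_nonneg (hM i j) (div_nonneg (sq_nonneg _) (hv j).le))
    fun j _ => le_of_eq (by field_simp [(hv j).ne'])

theorem dotProduct_diagonal_mulVec_self [DecidableEq ι] (p x : ι → ℝ) :
    x ⬝ᵥ diagonal p *ᵥ x = ∑ i, p i * x i ^ 2 := by
  simp only [dotProduct, mulVec_diagonal]
  exact Finset.sum_congr rfl fun i _ => by ring

theorem posSemidef_diagonal_sub_transpose_mul_diagonal_mul [DecidableEq ι]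
    (hM : ∀ i j, 0 ≤ M i j) {u v : ι → ℝ} (hu : ∀ i, 0 < u i) (hv : ∀ i, 0 < v i)
    (huM : u ᵥ* M ≤ u) (hMv : M *ᵥ v ≤ v) :
    (diagonal (u / v) - Mᵀ * diagonal (u / v) * M).PosSemidef := by
  refine .of_dotProduct_mulVec_nonneg ?_ fun x => ?_
  · refine (isHermitian_diagonal _).sub ?_
    simpa using isHermitian_conjTranspose_mul_mul M (isHermitian_diagonal (u / v))
  set y : ι → ℝ := fun j => x j ^ 2 / v j
  have hy : 0 ≤ y := fun j => div_nonneg (sq_nonneg _) (hv j).le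
  rw [star_trivial, sub_mulVec, dotProduct_sub, sub_nonneg]
  calc x ⬝ᵥ (Mᵀ * diagonal (u / v) * M) *ᵥ x = ∑ i, u i / v i * (M *ᵥ x) i ^ 2 := by
        rw [← mulVec_mulVec, ← mulVec_mulVec, dotProduct_mulVec, vecMul_transpose,
          dotProduct_diagonal_mulVec_self]
        rfl
    _ ≤ ∑ i, u i / v i * ((M *ᵥ v) i * (M *ᵥ y) i) := by
        gcongr with i
        · exact (div_pos (hu i) (hv i)).le
        · exact sq_mulVec_apply_le hM hv x i
    _ ≤ ∑ i, u i * (M *ᵥ y) i := by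
        refine Finset.sum_le_sum fun i _ => ?_
        rw [← mul_assoc]
        refine mul_le_mul_of_nonneg_right ?_ (mulVec_nonneg hM hy i)
        rw [div_mul_eq_mul_div, div_le_iff₀ (hv i)]
        exact mul_le_mul_of_nonneg_left (hMv i) (hu i).le
    _ = (u ᵥ* M) ⬝ᵥ y := dotProduct_mulVec u M y
    _ ≤ u ⬝ᵥ y := dotProduct_le_dotProduct_of_nonneg_right huM hy
    _ = x ⬝ᵥ diagonal (u / v) *ᵥ x := by
        rw [dotProduct_diagonal_mulVec_self]
        exact Finset.sum_congr rfl fun i _ => by simp only [y, Pi.div_apply]; ring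

end Lyapunov

theorem stmt2 {n : ℕ} (M : Matrix (Fin n) (Fin n) ℝ)
    (hM : ∀ i j, 0 ≤ M i j) (hirr : MatIrreducible M) (hρ : specRad M = 1) :
    ∃ P : Matrix (Fin n) (Fin n) ℝ,
      P.IsDiag ∧ (∀ i, 0 < P i i) ∧ (-(Mᵀ * P * M - P)).PosSemidef := by
  obtain ⟨r, v, hv, hMv⟩ := hirr.exists_pos_eigenvector hM
  obtain ⟨s, u, hu, hMu⟩ := hirr.transpose.exists_pos_eigenvector fun i j => hM j i
  refine ⟨diagonal (u / v), isDiag_diagonal _, fun i => by simpa using div_pos (hu i) (hv i), ?_⟩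
  rw [neg_sub]
  refine posSemidef_diagonal_sub_transpose_mul_diagonal_mul hM hu hv ?_
    (mulVec_le_self_of_specRad_le_one (fun i => (hv i).le) hMv hρ.le)
  rw [← mulVec_transpose]
  exact mulVec_le_self_of_specRad_le_one (fun i => (hu i).le) hMu (specRad_transpose M ▸ hρ.le)
end

section
/- If ρ(M(k+p-1)⋯M(k)) < 1 for every starting index k ∈ {0,...,p-1}, then the block cyclic matrix M̃ built from M(0),...,M(p-1) has spectral radius ρ(M̃) < 1. -/
/-!
If `M̃ v = μ v` with `v ≠ 0`, the blocks `v j` of `v` satisfy `M j v j = μ v (j + 1)`.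
Going once around the cycle from a nonzero block gives `(M (j + p - 1) ⋯ M j) v j = μ ^ p v j`,
so `|μ| ^ p ≤ ρ (M (j + p - 1) ⋯ M j) < 1`.
-/

open Matrix Filter

theorem Matrix.mem_spectrum_iff_exists_mulVec_eq_smul {K m : Type*} [Field K] [Fintype m]
    [DecidableEq m] {A : Matrix m m K} {μ : K} :
    μ ∈ spectrum K A ↔ ∃ v ≠ 0, A *ᵥ v = μ • v := by
  rw [← spectrum_toLin', ← Module.End.hasEigenvalue_iff_mem_spectrum]
  constructor
  · intro h
    obtain ⟨v, hv⟩ := h.exists_hasEigenvector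
    exact ⟨v, hv.2, by simpa using hv.apply_eq_smul⟩
  · rintro ⟨v, hv0, hv⟩
    exact Module.End.hasEigenvalue_of_hasEigenvector
      (Module.End.hasEigenvector_iff.mpr ⟨by simpa using hv, hv0⟩)

section SpecRad

variable {m : Type*} [Fintype m] [DecidableEq m] {A : Matrix m m ℝ}

theorem specRad_eq_sSup_image :
    specRad A = sSup ((‖·‖) '' spectrum ℂ (A.map (algebraMap ℝ ℂ))) := by
  simp only [specRad, Set.image, eq_comm]

theorem norm_le_specRad {μ : ℂ} (hμ : μ ∈ spectrum ℂ (A.map (algebraMap ℝ ℂ))) :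
    ‖μ‖ ≤ specRad A := by
  rw [specRad_eq_sSup_image]
  exact le_csSup ((finite_spectrum _).image _).bddAbove ⟨μ, hμ, rfl⟩

theorem specRad_lt_of_forall_norm_lt {c : ℝ} (hc : 0 < c)
    (h : ∀ μ ∈ spectrum ℂ (A.map (algebraMap ℝ ℂ)), ‖μ‖ < c) : specRad A < c := by
  rw [specRad_eq_sSup_image]
  rcases (spectrum ℂ (A.map (algebraMap ℝ ℂ))).eq_empty_or_nonempty with hempty | hne
  · rwa [hempty, Set.image_empty, Real.sSup_empty]
  · rw [((finite_spectrum _).image _).csSup_lt_iff (hne.image _)]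
    rintro _ ⟨μ, hμ, rfl⟩
    exact h μ hμ

end SpecRad

theorem mono_succ {n : ℕ} (t : ℕ) (M : ℕ → Matrix (Fin n) (Fin n) ℝ) (k : ℕ) :
    mono (t + 1) M k = M (k + t) * mono t M k := by
  simp [mono, List.range_succ]

theorem map_mono_mulVec_of_forall_mulVec_eq_smul {n : ℕ} {R : Type*} [CommSemiring R]
    (f : ℝ →+* R) {M : ℕ → Matrix (Fin n) (Fin n) ℝ} {w : ℕ → Fin n → R} {μ : R}
    (hstep : ∀ k, (M k).map f *ᵥ w k = μ • w (k + 1)) (t k : ℕ) :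
    (mono t M k).map f *ᵥ w k = μ ^ t • w (k + t) := by
  induction t with
  | zero => simp [mono]
  | succ t ih =>
    rw [mono_succ, Matrix.map_mul, ← mulVec_mulVec, ih, mulVec_smul, hstep, smul_smul,
      ← pow_succ, add_assoc]

def blockCyclic {m R : Type*} [Zero R] (p : ℕ) (N : ℕ → Matrix m m R) :
    Matrix (Fin p × m) (Fin p × m) R :=
  of fun x y => if (x.1 : ℕ) = ((y.1 : ℕ) + 1) % p then N y.1 x.2 y.2 else 0

theorem blockCyclic_map {m R S : Type*} [Zero R] [Zero S] (p : ℕ) (N : ℕ → Matrix m m R)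
    (f : R → S) (hf : f 0 = 0) :
    (blockCyclic p N).map f = blockCyclic p fun k => (N k).map f := by
  ext x y
  simp only [blockCyclic, map_apply, of_apply, apply_ite f, hf]

theorem Fin.val_add_one_eq_mod_iff {p : ℕ} [NeZero p] (j y : Fin p) :
    ((j + 1 : Fin p) : ℕ) = ((y : ℕ) + 1) % p ↔ y = j := by
  rw [← Nat.add_mod_mod, ← Fin.val_one', ← Fin.val_add, Fin.val_inj, add_left_inj, eq_comm]

theorem blockCyclic_mulVec_apply_succ {m R : Type*} [Fintype m] [NonUnitalNonAssocSemiring R]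
    {p : ℕ} [NeZero p] (N : ℕ → Matrix m m R) (v : Fin p × m → R) (j : Fin p) (i : m) :
    (blockCyclic p N *ᵥ v) (j + 1, i) = (N j *ᵥ fun i => v (j, i)) i := by
  simp only [mulVec, dotProduct, Fintype.sum_prod_type, blockCyclic, of_apply,
    Fin.val_add_one_eq_mod_iff, ite_mul, zero_mul]
  rw [Finset.sum_comm]
  simp

open Fin.NatCast in
theorem pow_mem_spectrum_mono_of_mem_spectrum_blockCyclic {n p : ℕ} [NeZero p]
    {M : ℕ → Matrix (Fin n) (Fin n) ℝ} (hper : Function.Periodic M p) {μ : ℂ}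
    (hμ : μ ∈ spectrum ℂ ((blockCyclic p M).map (algebraMap ℝ ℂ))) :
    ∃ k < p, μ ^ p ∈ spectrum ℂ ((mono p M k).map (algebraMap ℝ ℂ)) := by
  obtain ⟨v, hv0, hv⟩ := mem_spectrum_iff_exists_mulVec_eq_smul.mp hμ
  rw [blockCyclic_map _ _ _ (map_zero _)] at hv
  set w : ℕ → Fin n → ℂ := fun k i => v ((k : Fin p), i) with hw
  have hstep : ∀ k, (M k).map (algebraMap ℝ ℂ) *ᵥ w k = μ • w (k + 1) := by
    intro k
    ext i
    have hblock := congrFun hv ((k : Fin p) + 1, i)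
    rwa [blockCyclic_mulVec_apply_succ, Fin.val_natCast, hper.map_mod_nat, ← Nat.cast_succ]
      at hblock
  obtain ⟨⟨j, i⟩, hvji⟩ := Function.ne_iff.mp hv0
  refine ⟨j, j.isLt, mem_spectrum_iff_exists_mulVec_eq_smul.mpr ⟨w j, fun h => hvji ?_, ?_⟩⟩
  · simpa [hw] using congrFun h i
  · have hcycle := map_mono_mulVec_of_forall_mulVec_eq_smul _ hstep p j
    rwa [show w (j + p) = w j by simp [hw]] at hcycle

theorem stmt5 {n p : ℕ} (hp : 0 < p) (M : ℕ → Matrix (Fin n) (Fin n) ℝ)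
    (hper : ∀ k, M (k + p) = M k)
    (Mt : Matrix (Fin p × Fin n) (Fin p × Fin n) ℝ)
    (hMt : Mt = Matrix.of fun x y =>
      if (x.1 : ℕ) = ((y.1 : ℕ) + 1) % p then M (y.1 : ℕ) x.2 y.2 else 0)
    (hρ : ∀ k < p, specRad (mono p M k) < 1) :
    specRad Mt < 1 := by
  have : NeZero p := ⟨hp.ne'⟩
  change Mt = blockCyclic p M at hMt
  subst hMt
  refine specRad_lt_of_forall_norm_lt one_pos fun μ hμ => ?_
  obtain ⟨k, hk, hμp⟩ := pow_mem_spectrum_mono_of_mem_spectrum_blockCyclic hper hμ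
  have hnorm_pow : ‖μ‖ ^ p < 1 := by
    simpa only [norm_pow] using (norm_le_specRad hμp).trans_lt (hρ k hk)
  exact (pow_lt_one_iff_of_nonneg (norm_nonneg μ) hp.ne').mp hnorm_pow
end

section
/- For the time-invariant discrete-time SIS system x(k+1) = x(k) + h((I - X(k))B̄ - D)x(k) with x(0) ∈ [0,1]^n, if ρ(I - hD + hB̄) < 1 then the disease-free equilibrium x = 0 is globally exponentially stable. -/
open Matrix Filter

/-!
Since `(1 - x_i) ∑_j β_ij x_j ≥ 0`, the SIS update is dominated componentwise by its linearization
`M = I - hD + hB̄` at the disease-free equilibrium, and under the step-size assumptions `M` is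
entrywise nonnegative and the update keeps `[0,1]^n` invariant. Hence `0 ≤ x(k) ≤ M^k x(0)`, and
by Gelfand's formula `ρ(M) < 1` makes `‖M^k‖` decay geometrically.
-/

open Asymptotics
open scoped ENNReal NNReal

-- Matrices carry the operator norm induced by the sup norm of `Fin n → ℝ` used in the theorem.
attribute [local instance] Matrix.linftyOpNormedAddCommGroup Matrix.linftyOpNormedRing
  Matrix.linftyOpNormedAlgebra

theorem exists_norm_pow_le_mul_pow_of_spectralRadius_lt {A : Type*} [NormedRing A]
    [NormedAlgebra ℂ A] [CompleteSpace A] {a : A} {η : ℝ≥0} (hη : spectralRadius ℂ a < η) :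
    ∃ C > 0, ∀ k : ℕ, ‖a ^ k‖ ≤ C * η ^ k := by
  have hη0 : (0 : ℝ) < η := ENNReal.coe_pos.1 (pos_of_gt hη)
  have hgelfand := spectrum.pow_nnnorm_pow_one_div_tendsto_nhds_spectralRadius a
  have hev : ∀ᶠ k : ℕ in atTop, ‖a ^ k‖ ≤ 1 * ‖(η : ℝ) ^ k‖ := by
    filter_upwards [hgelfand.eventually_lt_const hη, eventually_ne_atTop 0] with k hk hk0
    rw [one_div, ENNReal.rpow_inv_lt_iff (by positivity), ENNReal.rpow_natCast] at hk
    rw [one_mul, Real.norm_of_nonneg (by positivity), ← coe_nnnorm]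
    exact_mod_cast hk.le
  obtain ⟨C, hC, hbound⟩ := bound_of_isBigO_nat_atTop (isBigO_iff.2 ⟨1, hev⟩)
  refine ⟨C, hC, fun k => ?_⟩
  simpa [abs_of_pos hη0] using hbound (pow_ne_zero k hη0.ne')

theorem Matrix.linfty_opNorm_map_eq {l m α β : Type*} [Fintype l] [Fintype m]
    [NormedAddCommGroup α] [NormedAddCommGroup β]
    (A : Matrix l m α) (f : α → β) (hf : ∀ a, ‖f a‖₊ = ‖a‖₊) : ‖A.map f‖ = ‖A‖ := by
  simp only [linfty_opNorm_def, map_apply, hf]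

theorem spectralRadius_map_le_specRad {m : Type*} [Fintype m] [DecidableEq m]
    (M : Matrix m m ℝ) :
    spectralRadius ℂ (M.map (algebraMap ℝ ℂ)) ≤ ENNReal.ofReal (specRad M) := by
  have hbdd : BddAbove {r : ℝ | ∃ μ ∈ spectrum ℂ (M.map (algebraMap ℝ ℂ)), r = ‖μ‖} := by
    simpa [Set.image, eq_comm] using
      (spectrum.isCompact (M.map (algebraMap ℝ ℂ))).bddAbove_image continuous_norm.continuousOn
  refine iSup₂_le fun μ hμ => ?_
  rw [← ENNReal.ofReal_coe_nnreal, coe_nnnorm]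
  exact ENNReal.ofReal_le_ofReal (le_csSup hbdd ⟨μ, hμ, rfl⟩)

theorem Matrix.exists_norm_pow_le_of_specRad_lt_one {m : Type*} [Fintype m] [DecidableEq m]
    {M : Matrix m m ℝ} (hρ : specRad M < 1) :
    ∃ C > 0, ∃ η : ℝ, 0 ≤ η ∧ η < 1 ∧ ∀ k : ℕ, ‖M ^ k‖ ≤ C * η ^ k := by
  have hlt : spectralRadius ℂ (M.map (algebraMap ℝ ℂ)) < 1 :=
    (spectralRadius_map_le_specRad M).trans_lt (ENNReal.ofReal_lt_one.2 hρ)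
  obtain ⟨η, hη, hη1⟩ := ENNReal.lt_iff_exists_nnreal_btwn.1 hlt
  obtain ⟨C, hC, hdecay⟩ := exists_norm_pow_le_mul_pow_of_spectralRadius_lt hη
  refine ⟨C, hC, η, η.2, mod_cast hη1, fun k => ?_⟩
  have hmap : (M.map (algebraMap ℝ ℂ)) ^ k = (M ^ k).map (algebraMap ℝ ℂ) :=
    (map_pow (algebraMap ℝ ℂ).mapMatrix M k).symm
  rw [← linfty_opNorm_map_eq (M ^ k) (algebraMap ℝ ℂ) Complex.nnnorm_real, ← hmap]
  exact hdecay k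

theorem Matrix.mulVec_mono_of_nonneg {l m R : Type*} [Fintype m] [Semiring R] [PartialOrder R]
    [IsOrderedRing R] {M : Matrix l m R} (hM : ∀ i j, 0 ≤ M i j) {u v : m → R} (huv : u ≤ v) :
    M *ᵥ u ≤ M *ᵥ v :=
  fun i => dotProduct_le_dotProduct_of_nonneg_left huv (hM i)

theorem pi_norm_le_pi_norm_of_nonneg_of_le {ι : Type*} [Fintype ι] {f g : ι → ℝ} (hf : 0 ≤ f)
    (hfg : f ≤ g) : ‖f‖ ≤ ‖g‖ :=
  (pi_norm_le_iff_of_nonneg (norm_nonneg g)).2 fun i => by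
    rw [Real.norm_of_nonneg (hf i)]
    exact (hfg i).trans ((le_abs_self _).trans (norm_le_pi_norm g i))

theorem mul_one_sub_add_one_sub_mul_mem_Icc {a b x : ℝ} (ha : a ∈ Set.Icc (0 : ℝ) 1)
    (hb : b ∈ Set.Icc (0 : ℝ) 1) (hx : x ∈ Set.Icc (0 : ℝ) 1) :
    x * (1 - a) + (1 - x) * b ∈ Set.Icc (0 : ℝ) 1 := by
  obtain ⟨ha0, ha1⟩ := ha
  obtain ⟨hb0, hb1⟩ := hb
  obtain ⟨hx0, hx1⟩ := hx
  constructor <;> nlinarith [mul_nonneg hx0 ha0, mul_nonneg (sub_nonneg.2 hx1) (sub_nonneg.2 hb1)]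

section Linearization

variable {n : ℕ} (h : ℝ) (β : Fin n → Fin n → ℝ) (δ : Fin n → ℝ)

noncomputable def sisLinearization : Matrix (Fin n) (Fin n) ℝ :=
  1 - h • diagonal δ + h • of β

theorem sisLinearization_mulVec_apply (y : Fin n → ℝ) (i : Fin n) :
    (sisLinearization h β δ *ᵥ y) i = y i + h * (∑ j, β i j * y j - δ i * y i) := by
  simp only [sisLinearization, add_mulVec, sub_mulVec, one_mulVec, smul_mulVec, mulVec_diagonal,
    Pi.add_apply, Pi.sub_apply, Pi.smul_apply, smul_eq_mul]
  rw [mulVec, dotProduct]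
  simp only [of_apply]
  ring

variable {h β δ}

theorem sisLinearization_nonneg (hh : 0 ≤ h) (hβ : ∀ i j, 0 ≤ β i j) (hδ : ∀ i, h * δ i ≤ 1)
    (i j : Fin n) : 0 ≤ sisLinearization h β δ i j := by
  have hhβ := mul_nonneg hh (hβ i j)
  rcases eq_or_ne i j with rfl | hij
  · simp only [sisLinearization, Matrix.add_apply, Matrix.sub_apply, Matrix.smul_apply,
      one_apply_eq, diagonal_apply_eq, of_apply, smul_eq_mul]
    linarith [hδ i]
  · simpa [sisLinearization, one_apply_ne hij, diagonal_apply_ne _ hij] using hhβ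

end Linearization

namespace SISdyn

variable {n : ℕ} {h : ℝ} {β : ℕ → Fin n → Fin n → ℝ} {δ : ℕ → Fin n → ℝ} {x : ℕ → Fin n → ℝ}

theorem mem_Icc (hx : SISdyn h β δ x) (hh : 0 ≤ h) (hβ0 : ∀ k i j, 0 ≤ β k i j)
    (hδ0 : ∀ k i, 0 ≤ δ k i) (hδ1 : ∀ k i, h * δ k i ≤ 1) (hβ1 : ∀ k i, h * ∑ j, β k i j ≤ 1)
    (h0 : ∀ i, x 0 i ∈ Set.Icc (0 : ℝ) 1) : ∀ k i, x k i ∈ Set.Icc (0 : ℝ) 1 := by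
  intro k
  induction k with
  | zero => exact h0
  | succ k ih =>
    intro i
    set s := ∑ j, β k i j * x k j
    have hs : h * s ∈ Set.Icc (0 : ℝ) 1 := by
      refine ⟨mul_nonneg hh (Finset.sum_nonneg fun j _ => mul_nonneg (hβ0 k i j) (ih j).1), ?_⟩
      refine le_trans (mul_le_mul_of_nonneg_left (Finset.sum_le_sum fun j _ => ?_) hh) (hβ1 k i)
      exact mul_le_of_le_one_right (hβ0 k i j) (ih j).2
    have hupdate : x (k + 1) i = x k i * (1 - h * δ k i) + (1 - x k i) * (h * s) := by
      rw [hx k i]; ring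
    rw [hupdate]
    exact mul_one_sub_add_one_sub_mul_mem_Icc ⟨mul_nonneg hh (hδ0 k i), hδ1 k i⟩ hs (ih i)

theorem le_sisLinearization_mulVec {k : ℕ} (hx : SISdyn h β δ x) (hh : 0 ≤ h)
    (hβ0 : ∀ i j, 0 ≤ β k i j) (hxk : ∀ i, x k i ∈ Set.Icc (0 : ℝ) 1) :
    x (k + 1) ≤ sisLinearization h (β k) (δ k) *ᵥ x k := by
  intro i
  have hinf : 0 ≤ h * (x k i * ∑ j, β k i j * x k j) :=
    mul_nonneg hh (mul_nonneg (hxk i).1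
      (Finset.sum_nonneg fun j _ => mul_nonneg (hβ0 i j) (hxk j).1))
  rw [sisLinearization_mulVec_apply, hx k i]
  linarith

end SISdyn

theorem SISdyn.le_pow_mulVec {n : ℕ} {h : ℝ} {β : Fin n → Fin n → ℝ} {δ : Fin n → ℝ}
    {x : ℕ → Fin n → ℝ} (hx : SISdyn h (fun _ => β) (fun _ => δ) x) (hh : 0 ≤ h)
    (hβ0 : ∀ i j, 0 ≤ β i j) (hδ1 : ∀ i, h * δ i ≤ 1)
    (hxI : ∀ k i, x k i ∈ Set.Icc (0 : ℝ) 1) (k : ℕ) :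
    x k ≤ sisLinearization h β δ ^ k *ᵥ x 0 := by
  induction k with
  | zero => simp
  | succ k ih =>
    calc x (k + 1) ≤ sisLinearization h β δ *ᵥ x k :=
          hx.le_sisLinearization_mulVec hh hβ0 (hxI k)
      _ ≤ sisLinearization h β δ *ᵥ (sisLinearization h β δ ^ k *ᵥ x 0) :=
          mulVec_mono_of_nonneg (sisLinearization_nonneg hh hβ0 hδ1) ih
      _ = sisLinearization h β δ ^ (k + 1) *ᵥ x 0 := by rw [mulVec_mulVec, ← pow_succ']

theorem stmt7 {n : ℕ} (h : ℝ) (hh : 0 < h)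
    (β : Fin n → Fin n → ℝ) (δ : Fin n → ℝ)
    (hβ0 : ∀ i j, 0 ≤ β i j) (hδ0 : ∀ i, 0 ≤ δ i)
    (hδ1 : ∀ i, h * δ i ≤ 1) (hβ1 : ∀ i, h * ∑ j, β i j ≤ 1)
    (hρ : specRad (1 - h • Matrix.diagonal δ + h • Matrix.of β) < 1) :
    ∃ α > (0:ℝ), ∃ η : ℝ, 0 ≤ η ∧ η < 1 ∧
      ∀ x : ℕ → Fin n → ℝ, SISdyn h (fun _ => β) (fun _ => δ) x →
        (∀ i, x 0 i ∈ Set.Icc (0:ℝ) 1) →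
        ∀ k, ‖x k‖ ≤ α * ‖x 0‖ * η ^ k := by
  obtain ⟨C, hC, η, hη0, hη1, hdecay⟩ := exists_norm_pow_le_of_specRad_lt_one hρ
  refine ⟨C, hC, η, hη0, hη1, fun x hx h0 k => ?_⟩
  have hxI := hx.mem_Icc hh.le (fun _ => hβ0) (fun _ => hδ0) (fun _ => hδ1) (fun _ => hβ1) h0
  calc ‖x k‖ ≤ ‖sisLinearization h β δ ^ k *ᵥ x 0‖ :=
        pi_norm_le_pi_norm_of_nonneg_of_le (fun i => (hxI k i).1)
          (hx.le_pow_mulVec hh.le hβ0 hδ1 hxI k)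
    _ ≤ ‖sisLinearization h β δ ^ k‖ * ‖x 0‖ := linfty_opNorm_mulVec _ _
    _ ≤ C * η ^ k * ‖x 0‖ := by gcongr; exact hdecay k
    _ = C * ‖x 0‖ * η ^ k := by ring
end
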